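/- Let F_n be the free group on x_1,…,x_n, RF_n the reduced free group, and fix i ∈ {1,…,n}. For g ∈ F_n, the commutator [x_i, g] maps to the identity of RF_n if and only if E(g) = 1 + (terms containing X_i) + (repeated terms); that is, every non-repeated monomial of E(g) − 1 that has nonzero coefficient contains the variable X_i. -/

import Mathlib

/-!
Work in the reduced Magnus algebra: power series in noncommuting variables `X_v` modulo the
monomials with a repeated variable. There, any two series all of whose terms contain `X_i`
multiply to zero, so the reduced Magnus expansion `x_v ↦ 1 + X_v` kills the relators of `RF_n`.
Hence if `[x_i, g]` is trivial in `RF_n`, then `X_i` commutes with `E(g)`, and comparing the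
coefficients of `X_i X_l` and `X_l X_i` shows that `E(g)` has no non-repeated term avoiding `X_i`.

Conversely, the reduced Magnus expansion is injective on `RF_n` (Milnor). Erasing the generators
one at a time, this comes down to elements `m` of the normal closure of `x_j` with `E(m) = 1`.
In `RF_n` that normal closure is abelian, so it is a module over the group ring `ℤ[F_n]`, and
`m = x_j ^ α` for some `α`. The condition `E(m) = 1` says that the image of `α` in the reduced
Magnus algebra has no term avoiding `X_j`, which forces `α` into the two-sided ideal generated by
`x_j - 1` and the elements `(x_v - 1) u (x_v - 1)`; each of these acts trivially on `x_j`.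
Finally, if every non-repeated term of `E(g) - 1` contains `X_i`, then erasing `x_i` from `g`
leaves an element with trivial expansion, so `g` lies in the abelian normal closure of `x_i`.
-/

/-- Coefficient function of the Magnus expansion of a single letter `x_i^{±1}`:
`x_i ↦ 1 + X_i` and `x_i⁻¹ ↦ 1 - X_i + X_i² - ⋯`. -/
def genCoeff {n : ℕ} (i : Fin n) (b : Bool) (l : List (Fin n)) : ℤ :=
  if b then (if l = [] ∨ l = [i] then 1 else 0)
  else (if l.all (· = i) then (-1) ^ l.length else 0)

/-- Convolution product on coefficient functions of noncommutative power series. -/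
def conv {n : ℕ} (f g : List (Fin n) → ℤ) (l : List (Fin n)) : ℤ :=
  ∑ k ∈ Finset.range (l.length + 1), f (l.take k) * g (l.drop k)

/-- Coefficients of the Magnus expansion of a word in the letters `x_i^{±1}`. -/
def wordCoeff {n : ℕ} : List (Fin n × Bool) → List (Fin n) → ℤ
  | [] => fun l => if l = [] then 1 else 0
  | p :: rest => conv (genCoeff p.1 p.2) (wordCoeff rest)

/-- `magnus w l` is the coefficient of the noncommutative monomial `X_{l}` in the
Magnus expansion `E(w) ∈ ℤ⟨⟨X_1,…,X_n⟩⟩` of the free group element `w`. -/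
def magnus {n : ℕ} (w : FreeGroup (Fin n)) (l : List (Fin n)) : ℤ :=
  wordCoeff w.toWord l


/-- The set of relators `[x_i, w⁻¹ x_i w]` (with `[a,b] = a⁻¹b⁻¹ab`) in the free group. -/
def redRelators (n : ℕ) : Set (FreeGroup (Fin n)) :=
  {r | ∃ (i : Fin n) (w : FreeGroup (Fin n)),
    r = (FreeGroup.of i)⁻¹ * (w⁻¹ * FreeGroup.of i * w)⁻¹ *
        FreeGroup.of i * (w⁻¹ * FreeGroup.of i * w)}

/-- The reduced free group `RF_n`. -/
def RF (n : ℕ) := FreeGroup (Fin n) ⧸ Subgroup.normalClosure (redRelators n)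

instance (n : ℕ) : Group (RF n) := by unfold RF; infer_instance

/-! ## The reduced Magnus algebra -/

/-- Power series in noncommuting variables indexed by `α`, modulo monomials with a repeated
variable, recorded by their coefficients on repetition-free words. -/
def ReducedSeries (k α : Type*) := {l : List α // l.Nodup} → k

namespace ReducedSeries

variable {k α : Type*}

lemma apply_congr (f : ReducedSeries k α) {a b : List α} {ha : a.Nodup} {hb : b.Nodup}
    (h : a = b) : f ⟨a, ha⟩ = f ⟨b, hb⟩ := by
  subst h; rfl

section AddCommGroup

variable [AddCommGroup k]

instance : AddCommGroup (ReducedSeries k α) := Pi.addCommGroup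

lemma zero_apply (l : {l : List α // l.Nodup}) : (0 : ReducedSeries k α) l = 0 := rfl

lemma add_apply (f g : ReducedSeries k α) (l : {l : List α // l.Nodup}) :
    (f + g) l = f l + g l := rfl

lemma sub_apply (f g : ReducedSeries k α) (l : {l : List α // l.Nodup}) :
    (f - g) l = f l - g l := rfl

lemma zsmul_apply (m : ℤ) (f : ReducedSeries k α) (l : {l : List α // l.Nodup}) :
    (m • f) l = m • f l := rfl

lemma sum_apply {ι : Type*} (s : Finset ι) (f : ι → ReducedSeries k α)
    (l : {l : List α // l.Nodup}) : (∑ i ∈ s, f i) l = ∑ i ∈ s, f i l :=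
  Finset.sum_apply l s f

end AddCommGroup

section Ring

variable [Ring k]

instance : Mul (ReducedSeries k α) where
  mul f g l := ∑ i ∈ Finset.range (l.1.length + 1),
    f ⟨l.1.take i, (List.take_sublist i l.1).nodup l.2⟩ *
      g ⟨l.1.drop i, (List.drop_sublist i l.1).nodup l.2⟩

instance : One (ReducedSeries k α) where
  one l := if l.1 = [] then 1 else 0

lemma mul_apply (f g : ReducedSeries k α) (l : List α) (hl : l.Nodup) :
    (f * g) ⟨l, hl⟩ = ∑ i ∈ Finset.range (l.length + 1),
      f ⟨l.take i, (List.take_sublist i l).nodup hl⟩ *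
        g ⟨l.drop i, (List.drop_sublist i l).nodup hl⟩ := rfl

lemma one_apply (l : {l : List α // l.Nodup}) :
    (1 : ReducedSeries k α) l = if l.1 = [] then 1 else 0 := rfl

protected lemma mul_assoc (f g h : ReducedSeries k α) : f * g * h = f * (g * h) := by
  funext ⟨l, hl⟩
  let t : ℕ → ℕ → k := fun p i => f ⟨l.take p, (List.take_sublist p l).nodup hl⟩ *
    g ⟨(l.drop p).take (i - p),
      (List.take_sublist _ _).nodup ((List.drop_sublist p l).nodup hl)⟩ *
    h ⟨l.drop i, (List.drop_sublist i l).nodup hl⟩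
  have lhs : (f * g * h) ⟨l, hl⟩ =
      ∑ i ∈ Finset.range (l.length + 1), ∑ p ∈ Finset.range (i + 1), t p i := by
    rw [mul_apply]
    refine Finset.sum_congr rfl fun i hi => ?_
    rw [Finset.mem_range] at hi
    rw [mul_apply, Finset.sum_mul, List.length_take_of_le (by omega)]
    refine Finset.sum_congr rfl fun p hp => ?_
    rw [Finset.mem_range] at hp
    rw [apply_congr f (List.take_take.trans (by rw [min_eq_left (by omega)])),
      apply_congr g List.drop_take]
  have rhs : (f * (g * h)) ⟨l, hl⟩ =
      ∑ p ∈ Finset.range (l.length + 1), ∑ i ∈ Finset.Ico p (l.length + 1), t p i := by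
    rw [mul_apply]
    refine Finset.sum_congr rfl fun p hp => ?_
    rw [Finset.mem_range] at hp
    rw [mul_apply, Finset.mul_sum, List.length_drop, Finset.sum_Ico_eq_sum_range,
      show l.length + 1 - p = l.length - p + 1 by omega]
    refine Finset.sum_congr rfl fun q _ => ?_
    rw [apply_congr h List.drop_drop]
    simp only [t, Nat.add_sub_cancel_left]
    exact (mul_assoc _ _ _).symm
  rw [lhs, rhs]
  simp only [Finset.range_eq_Ico, Finset.sum_Ico_Ico_comm]

protected lemma one_mul (f : ReducedSeries k α) : 1 * f = f := by
  funext ⟨l, hl⟩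
  rw [mul_apply, Finset.sum_range_succ', Finset.sum_eq_zero, zero_add]
  · simp [one_apply]
  · intro i hi
    have : l.take (i + 1) ≠ [] := by
      rw [Ne, List.take_eq_nil_iff]
      rintro (h | rfl) <;> simp_all
    simp [one_apply, this]

protected lemma mul_one (f : ReducedSeries k α) : f * 1 = f := by
  funext ⟨l, hl⟩
  rw [mul_apply, Finset.sum_range_succ, Finset.sum_eq_zero, zero_add]
  · simp [one_apply]
  · intro i hi
    have : l.drop i ≠ [] := by simp at hi ⊢; omega
    simp [one_apply, this]

instance : Ring (ReducedSeries k α) where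
  mul_assoc := ReducedSeries.mul_assoc
  one_mul := ReducedSeries.one_mul
  mul_one := ReducedSeries.mul_one
  left_distrib f g h := funext fun ⟨l, hl⟩ => by
    simp only [mul_apply, add_apply, mul_add, Finset.sum_add_distrib]
  right_distrib f g h := funext fun ⟨l, hl⟩ => by
    simp only [mul_apply, add_apply, add_mul, Finset.sum_add_distrib]
  zero_mul f := funext fun ⟨l, hl⟩ => by
    simp only [mul_apply, zero_apply, zero_mul, Finset.sum_const_zero]
  mul_zero f := funext fun ⟨l, hl⟩ => by
    simp only [mul_apply, zero_apply, mul_zero, Finset.sum_const_zero]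

def constantCoeff : ReducedSeries k α →+* k where
  toFun f := f ⟨[], List.nodup_nil⟩
  map_one' := rfl
  map_mul' f g := by simp [mul_apply]
  map_zero' := rfl
  map_add' _ _ := rfl

def varIdeal (j : α) : TwoSidedIdeal (ReducedSeries k α) :=
  .mk' {f | ∀ l : {l : List α // l.Nodup}, j ∉ l.1 → f l = 0}
    (fun _ _ => rfl)
    (fun hf hg l hl => by rw [add_apply, hf l hl, hg l hl, add_zero])
    (fun hf l hl => by rw [show (-_ : ReducedSeries k α) l = -_ from rfl, hf l hl, neg_zero])
    (fun {g f} hf ⟨l, hl⟩ hj => Finset.sum_eq_zero fun i _ => by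
      rw [hf _ fun h => hj ((List.drop_sublist i l).subset h), mul_zero])
    (fun {f g} hf ⟨l, hl⟩ hj => Finset.sum_eq_zero fun i _ => by
      rw [hf _ fun h => hj ((List.take_sublist i l).subset h), zero_mul])

lemma mem_varIdeal {j : α} {f : ReducedSeries k α} :
    f ∈ varIdeal j ↔ ∀ l : {l : List α // l.Nodup}, j ∉ l.1 → f l = 0 :=
  TwoSidedIdeal.mem_mk' ..

/-- A repetition-free word cannot contain `j` on both sides of a splitting. -/
lemma mul_eq_zero_of_mem_varIdeal {j : α} {f g : ReducedSeries k α} (hf : f ∈ varIdeal j)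
    (hg : g ∈ varIdeal j) : f * g = 0 := by
  funext ⟨l, hl⟩
  refine Finset.sum_eq_zero fun i _ => ?_
  by_cases hjt : j ∈ l.take i
  · have hjd : j ∉ l.drop i := fun hjd =>
      List.disjoint_of_nodup_append (by rwa [List.take_append_drop]) hjt hjd
    rw [mem_varIdeal.1 hg _ hjd, mul_zero]
  · rw [mem_varIdeal.1 hf _ hjt, zero_mul]

lemma commute_of_sub_one_mem_varIdeal {j : α} {a b : ReducedSeries k α}
    (ha : a - 1 ∈ varIdeal j) (hb : b - 1 ∈ varIdeal j) : Commute a b := by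
  rw [commute_iff_eq, ← sub_eq_zero]
  calc a * b - b * a = (a - 1) * (b - 1) - (b - 1) * (a - 1) := by noncomm_ring
    _ = 0 := by rw [mul_eq_zero_of_mem_varIdeal ha hb, mul_eq_zero_of_mem_varIdeal hb ha, sub_zero]

end Ring

section Monomial

variable [Ring k] [DecidableEq α]

def monomial (w : List α) : ReducedSeries k α := fun l => if l.1 = w then 1 else 0

lemma monomial_apply (w : List α) (l : {l : List α // l.Nodup}) :
    (monomial w : ReducedSeries k α) l = if l.1 = w then 1 else 0 := rfl

lemma monomial_mul_monomial (u w : List α) :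
    (monomial u * monomial w : ReducedSeries k α) = monomial (u ++ w) := by
  funext ⟨l, hl⟩
  rw [mul_apply, monomial_apply]
  by_cases h : l = u ++ w
  · subst h
    rw [Finset.sum_eq_single u.length]
    · simp [monomial_apply]
    · intro i hi hne
      have : (u ++ w).take i ≠ u := fun h' => hne <| by
        have := congrArg List.length h'
        simp only [List.length_take, List.length_append, Finset.mem_range] at this hi
        omega
      simp [monomial_apply, this]
    · simp
  · refine (Finset.sum_eq_zero fun i _ => ?_).trans (if_neg h).symm
    by_cases hu : l.take i = u
    · have hw : l.drop i ≠ w := fun hw => h (by rw [← hu, ← hw, List.take_append_drop])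
      simp [monomial_apply, hw]
    · simp [monomial_apply, hu]

lemma monomial_eq_zero_of_not_nodup {w : List α} (hw : ¬w.Nodup) :
    (monomial w : ReducedSeries k α) = 0 :=
  funext fun l => if_neg fun (h : l.1 = w) => hw (h ▸ l.2)

lemma monomial_mem_varIdeal {j : α} {w : List α} (hj : j ∈ w) :
    (monomial w : ReducedSeries k α) ∈ varIdeal j :=
  mem_varIdeal.2 fun l hl => if_neg fun (h : l.1 = w) => hl (h ▸ hj)

lemma monomial_singleton_mul_apply_cons (j : α) (f : ReducedSeries k α) {q : List α}
    (h : (j :: q).Nodup) :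
    (monomial [j] * f : ReducedSeries k α) ⟨j :: q, h⟩ = f ⟨q, h.of_cons⟩ := by
  rw [mul_apply, Finset.sum_eq_single 1]
  · simp [monomial_apply]
  · intro i hi hi1
    have : (j :: q).take i ≠ [j] := fun h' => hi1 <| by
      have := congrArg List.length h'
      simp only [List.length_take, List.length_cons, List.length_nil, Finset.mem_range] at this hi
      omega
    simp [monomial_apply, this]
  · simp

lemma mul_monomial_mul_apply_cons (j : α) (u v : ReducedSeries k α) {q : List α}
    (h : (j :: q).Nodup) :
    (u * monomial [j] * v : ReducedSeries k α) ⟨j :: q, h⟩ =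
      constantCoeff u * v ⟨q, h.of_cons⟩ := by
  rw [mul_assoc, mul_apply, Finset.sum_range_succ', Finset.sum_eq_zero, zero_add]
  · simp [monomial_singleton_mul_apply_cons, constantCoeff]
  · intro i _
    have hX : monomial [j] * v ∈ varIdeal j :=
      TwoSidedIdeal.mul_mem_right _ _ _ (monomial_mem_varIdeal (List.mem_singleton_self j))
    rw [mem_varIdeal.1 hX, mul_zero]
    exact fun hj => (List.nodup_cons.1 h).1 ((List.drop_sublist i q).subset hj)

lemma apply_eq_zero_of_commute {j : α} {f : ReducedSeries k α} (hf : Commute (monomial [j]) f)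
    {l : List α} (hl : l.Nodup) (hne : l ≠ []) (hj : j ∉ l) : f ⟨l, hl⟩ = 0 := by
  have hjl : (j :: l).Nodup := List.nodup_cons.2 ⟨hj, hl⟩
  rw [← monomial_singleton_mul_apply_cons j f hjl, hf.eq, mul_apply]
  refine Finset.sum_eq_zero fun i _ => ?_
  have : (j :: l).drop i ≠ [j] := by
    cases i with
    | zero => simpa using hne
    | succ i => exact fun h' => hj ((List.drop_sublist i l).subset (by simp_all))
  simp [monomial_apply, this]

def eraseVar (j : α) : ReducedSeries k α →+* ReducedSeries k α where
  toFun f l := if j ∈ l.1 then 0 else f l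
  map_one' := funext fun l => by
    by_cases hj : j ∈ l.1
    · simp [hj, one_apply, List.ne_nil_of_mem hj]
    · simp [hj]
  map_mul' f g := funext fun ⟨l, hl⟩ => by
    by_cases hj : j ∈ l
    · refine (if_pos hj).trans (Finset.sum_eq_zero fun i _ => ?_).symm
      rcases List.mem_append.1 ((List.take_append_drop i l).symm ▸ hj) with h | h <;> simp [h]
    · refine (if_neg hj).trans (Finset.sum_congr rfl fun i _ => ?_)
      have h1 : j ∉ l.take i := fun h => hj ((List.take_sublist i l).subset h)
      have h2 : j ∉ l.drop i := fun h => hj ((List.drop_sublist i l).subset h)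
      simp [h1, h2]
  map_zero' := funext fun l => ite_self _
  map_add' f g := funext fun l => by
    show (if j ∈ l.1 then 0 else f l + g l) =
      (if j ∈ l.1 then 0 else f l) + (if j ∈ l.1 then 0 else g l)
    split_ifs <;> simp

lemma eraseVar_apply (j : α) (f : ReducedSeries k α) (l : {l : List α // l.Nodup}) :
    eraseVar j f l = if j ∈ l.1 then 0 else f l := rfl

lemma eraseVar_monomial (j : α) (w : List α) :
    eraseVar j (monomial w : ReducedSeries k α) = if j ∈ w then 0 else monomial w := by
  funext l
  rw [eraseVar_apply, monomial_apply]
  by_cases hw : j ∈ w <;> by_cases hl : j ∈ l.1 <;> by_cases hlw : l.1 = w <;>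
    simp_all [zero_apply, monomial_apply]

lemma monomial_singleton_mul_self (v : α) :
    (monomial [v] * monomial [v] : ReducedSeries k α) = 0 := by
  rw [monomial_mul_monomial]
  exact monomial_eq_zero_of_not_nodup (by simp)

def unitX (v : α) : (ReducedSeries k α)ˣ where
  val := 1 + monomial [v]
  inv := 1 - monomial [v]
  val_inv := by noncomm_ring [monomial_singleton_mul_self]
  inv_val := by noncomm_ring [monomial_singleton_mul_self]

lemma val_unitX_zpow (v : α) (m : ℤ) :
    ((unitX v ^ m : (ReducedSeries k α)ˣ) : ReducedSeries k α) = 1 + m • monomial [v] := by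
  induction m using Int.induction_on with
  | zero => simp
  | succ m ih =>
    rw [zpow_add_one, Units.val_mul, ih]
    show (1 + (m : ℤ) • monomial [v]) * (1 + monomial [v]) = _
    rw [add_smul, one_smul]
    noncomm_ring [monomial_singleton_mul_self]
  | pred m ih =>
    rw [zpow_sub_one, Units.val_mul, ih]
    show (1 + (-(m : ℤ)) • monomial [v]) * (1 - monomial [v]) = _
    rw [sub_smul, one_smul]
    noncomm_ring [monomial_singleton_mul_self]

lemma conj_unitX_sub_one_mem_varIdeal (j : α) (c : (ReducedSeries k α)ˣ) :
    ((c⁻¹ * unitX j * c : (ReducedSeries k α)ˣ) : ReducedSeries k α) - 1 ∈ varIdeal j := by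
  have : ((c⁻¹ * unitX j * c : (ReducedSeries k α)ˣ) : ReducedSeries k α) - 1 =
      ((c⁻¹ : (ReducedSeries k α)ˣ) : ReducedSeries k α) * monomial [j] *
        (c : ReducedSeries k α) := by
    simp only [Units.val_mul, unitX]
    rw [mul_add, add_mul, mul_one, Units.inv_mul, add_sub_cancel_left]
  rw [this]
  exact TwoSidedIdeal.mul_mem_right _ _ _ (TwoSidedIdeal.mul_mem_left _ _ _
    (monomial_mem_varIdeal (List.mem_singleton_self j)))

end Monomial

lemma linearIndependent_monomial [DecidableEq α] :
    LinearIndependent ℤ fun l : {l : List α // l.Nodup} =>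
      (monomial l.1 : ReducedSeries ℤ α) := by
  refine linearIndependent_iff'.2 fun s g hg i hi => ?_
  have := congrFun hg i
  simp only [sum_apply, zsmul_apply, monomial_apply, ← Subtype.ext_iff, smul_ite, smul_zero,
    Finset.sum_ite_eq, hi] at this
  simpa [zero_apply] using this

end ReducedSeries

/-! ## The reduced Magnus expansion -/

open ReducedSeries (monomial unitX varIdeal constantCoeff eraseVar)

section Magnus

variable {α : Type*} [DecidableEq α]

def reducedMagnus : FreeGroup α →* (ReducedSeries ℤ α)ˣ := FreeGroup.lift unitX

lemma reducedMagnus_of (v : α) : reducedMagnus (FreeGroup.of v) = unitX v :=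
  FreeGroup.lift_apply_of

lemma constantCoeff_reducedMagnus (g : FreeGroup α) :
    constantCoeff (reducedMagnus g : ReducedSeries ℤ α) = 1 := by
  have : (Units.map (constantCoeff : ReducedSeries ℤ α →+* ℤ).toMonoidHom).comp
      reducedMagnus = 1 :=
    FreeGroup.ext_hom _ _ fun v => Units.ext <| by
      simp [reducedMagnus_of, unitX, constantCoeff, ReducedSeries.add_apply,
        ReducedSeries.one_apply, ReducedSeries.monomial_apply]
  exact congrArg Units.val (DFunLike.congr_fun this g)

lemma reducedMagnus_mk_singleton_apply {n : ℕ} (v : Fin n) (b : Bool) {l : List (Fin n)}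
    (hl : l.Nodup) :
    (reducedMagnus (FreeGroup.mk [(v, b)]) : ReducedSeries ℤ (Fin n)) ⟨l, hl⟩ =
      genCoeff v b l := by
  cases b
  · rw [show FreeGroup.mk [(v, false)] = (FreeGroup.of v)⁻¹ from rfl, map_inv, reducedMagnus_of]
    show (1 - monomial [v] : ReducedSeries ℤ (Fin n)) ⟨l, hl⟩ = _
    rw [ReducedSeries.sub_apply, ReducedSeries.one_apply, ReducedSeries.monomial_apply, genCoeff]
    match l, hl with
    | [], _ => simp
    | [a], _ => by_cases a = v <;> simp_all
    | a :: b :: t, hl =>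
      have : ¬(a = v ∧ b = v) := fun ⟨ha, hb⟩ => (List.nodup_cons.1 hl).1 (by simp [ha, hb])
      simp_all
  · rw [show FreeGroup.mk [(v, true)] = FreeGroup.of v from rfl, reducedMagnus_of]
    show (1 + monomial [v] : ReducedSeries ℤ (Fin n)) ⟨l, hl⟩ = _
    rw [ReducedSeries.add_apply, ReducedSeries.one_apply, ReducedSeries.monomial_apply, genCoeff]
    by_cases h : l = [] <;> simp [h]

lemma reducedMagnus_mk_apply {n : ℕ} (w : List (Fin n × Bool)) {l : List (Fin n)}
    (hl : l.Nodup) :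
    (reducedMagnus (FreeGroup.mk w) : ReducedSeries ℤ (Fin n)) ⟨l, hl⟩ = wordCoeff w l := by
  induction w generalizing l with
  | nil => exact ReducedSeries.one_apply _
  | cons p w ih =>
    rw [show FreeGroup.mk (p :: w) = FreeGroup.mk [p] * FreeGroup.mk w from rfl, map_mul,
      Units.val_mul, ReducedSeries.mul_apply, wordCoeff, conv]
    refine Finset.sum_congr rfl fun i _ => ?_
    rw [reducedMagnus_mk_singleton_apply, ih]

lemma magnus_eq_reducedMagnus_apply {n : ℕ} (g : FreeGroup (Fin n)) {l : List (Fin n)}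
    (hl : l.Nodup) : magnus g l = (reducedMagnus g : ReducedSeries ℤ (Fin n)) ⟨l, hl⟩ := by
  rw [magnus, ← reducedMagnus_mk_apply, FreeGroup.mk_toWord]

end Magnus

namespace FreeGroup

variable {α : Type*} [DecidableEq α]

def eraseGens (S : Finset α) : FreeGroup α →* FreeGroup α :=
  FreeGroup.lift fun v => if v ∈ S then 1 else of v

lemma eraseGens_of (S : Finset α) (v : α) :
    eraseGens S (of v) = if v ∈ S then 1 else of v :=
  lift_apply_of

lemma eraseGens_empty : eraseGens (∅ : Finset α) = MonoidHom.id _ :=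
  ext_hom _ _ fun v => by simp [eraseGens_of]

lemma eraseGens_univ [Fintype α] : eraseGens (Finset.univ : Finset α) = 1 :=
  ext_hom _ _ fun v => by simp [eraseGens_of]

lemma eraseGens_insert (j : α) (S : Finset α) :
    eraseGens (insert j S) = (eraseGens S).comp (eraseGens {j}) :=
  ext_hom _ _ fun v => by by_cases hv : v = j <;> simp [eraseGens_of, hv]

lemma mul_inv_eraseGens_mem_normalClosure (j : α) (g : FreeGroup α) :
    g * (eraseGens {j} g)⁻¹ ∈ Subgroup.normalClosure {of j} := by
  set N := Subgroup.normalClosure {of j}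
  have hj : of j ∈ N := Subgroup.subset_normalClosure (Set.mem_singleton _)
  have : (QuotientGroup.mk' N).comp (eraseGens {j}) = QuotientGroup.mk' N :=
    ext_hom _ _ fun v => by
      by_cases hv : v = j
      · subst hv
        rw [MonoidHom.comp_apply, eraseGens_of, if_pos (Finset.mem_singleton_self v),
          _root_.map_one]
        exact ((QuotientGroup.eq_one_iff _).2 hj).symm
      · simp [eraseGens_of, hv]
  rw [← div_eq_mul_inv, ← QuotientGroup.eq_iff_div_mem]
  exact (DFunLike.congr_fun this g).symm

end FreeGroup

open FreeGroup (eraseGens)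

lemma reducedMagnus_eraseGens_singleton {α : Type*} [DecidableEq α] (j : α) (g : FreeGroup α) :
    reducedMagnus (eraseGens {j} g) =
      Units.map (eraseVar j : ReducedSeries ℤ α →+* ReducedSeries ℤ α).toMonoidHom
        (reducedMagnus g) := by
  have : reducedMagnus.comp (eraseGens {j}) =
      (Units.map (eraseVar j : ReducedSeries ℤ α →+* _).toMonoidHom).comp reducedMagnus := by
    refine FreeGroup.ext_hom _ _ fun v => Units.ext ?_
    by_cases hv : v = j
    · subst hv
      simp [FreeGroup.eraseGens_of, reducedMagnus_of, unitX, ReducedSeries.eraseVar_monomial]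
    · simp [FreeGroup.eraseGens_of, reducedMagnus_of, unitX, ReducedSeries.eraseVar_monomial, hv,
        Ne.symm hv]
  exact DFunLike.congr_fun this g

/-! ## Normal closures with commuting conjugates -/

section ConjugatesCommute

variable {G : Type*} [Group G]

lemma commute_iff_inv_mul_inv_mul_mul_eq_one {a b : G} :
    Commute a b ↔ a⁻¹ * b⁻¹ * a * b = 1 := by
  rw [show a⁻¹ * b⁻¹ * a * b = (b * a)⁻¹ * (a * b) by group, inv_mul_eq_one,
    commute_iff_eq, eq_comm]

lemma isMulCommutative_normalClosure_singleton {x : G} (h : ∀ c : G, Commute x (c⁻¹ * x * c)) :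
    IsMulCommutative (Subgroup.normalClosure {x}) := by
  refine Subgroup.isMulCommutative_closure ?_
  simp only [Group.mem_conjugatesOfSet_iff, Set.mem_singleton_iff, exists_eq_left, isConj_iff]
  rintro _ ⟨c, rfl⟩ _ ⟨d, rfl⟩
  have := (h (d⁻¹ * c)).map (MulAut.conj c)
  simp only [MulAut.conj_apply] at this
  convert this.eq using 2
  group

variable {x z : G}

lemma conj_mul_self_mul [IsMulCommutative (Subgroup.normalClosure {x})] (a b : G) :
    (a * x * b)⁻¹ * x * (a * x * b) = (a * b)⁻¹ * x * (a * b) := by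
  have hx : x ∈ Subgroup.normalClosure {x} := Subgroup.subset_normalClosure rfl
  have h : (a⁻¹ * x * a) * x = x * (a⁻¹ * x * a) :=
    setLike_mul_comm (Subgroup.normalClosure_normal.conj_mem' x hx a) hx
  calc (a * x * b)⁻¹ * x * (a * x * b) = b⁻¹ * x⁻¹ * ((a⁻¹ * x * a) * x) * b := by group
    _ = (a * b)⁻¹ * x * (a * b) := by rw [h]; group

/-- Writing `x ^ g = g⁻¹ x g`, this says `x ^ (a (z - 1) u (z - 1) b) = 1` in the abelian normal
closure of `x`. -/
lemma conj_second_difference_eq_one [IsMulCommutative (Subgroup.normalClosure {x})]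
    [IsMulCommutative (Subgroup.normalClosure {z})] (a u b : G) :
    (a * z * u * z * b)⁻¹ * x * (a * z * u * z * b) *
      ((a * z * u * b)⁻¹ * x * (a * z * u * b))⁻¹ *
      ((a * u * z * b)⁻¹ * x * (a * u * z * b))⁻¹ *
      ((a * u * b)⁻¹ * x * (a * u * b)) = 1 := by
  have hxN : (Subgroup.normalClosure {x}).Normal := Subgroup.normalClosure_normal
  have hzN : (Subgroup.normalClosure {z}).Normal := Subgroup.normalClosure_normal
  have hx : x ∈ Subgroup.normalClosure {x} := Subgroup.subset_normalClosure rfl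
  have hz : z ∈ Subgroup.normalClosure {z} := Subgroup.subset_normalClosure rfl
  have hQR : Commute ((a * z * u * b)⁻¹ * x * (a * z * u * b))
      ((a * u * z * b)⁻¹ * x * (a * u * z * b)) :=
    setLike_mul_comm (hxN.conj_mem' x hx _) (hxN.conj_mem' x hx _)
  obtain ⟨y, hy_def⟩ : ∃ y, y = a⁻¹ * x * a := ⟨_, rfl⟩
  have hxy : x = a * y * a⁻¹ := by rw [hy_def]; group
  have hy : y ∈ Subgroup.normalClosure {x} := hy_def ▸ hxN.conj_mem' x hx a
  have hyz : Commute (z⁻¹ * y⁻¹ * z) y := setLike_mul_comm (hxN.conj_mem' _ (inv_mem hy) z) hy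
  -- `z⁻¹ y z y⁻¹` lies in the normal closures of both `x` and `z`.
  obtain ⟨ε, hε_def⟩ : ∃ ε, ε = u⁻¹ * (z⁻¹ * y * z * y⁻¹) * u := ⟨_, rfl⟩
  have hε : ε ∈ Subgroup.normalClosure {z} := by
    rw [hε_def, show z⁻¹ * y * z * y⁻¹ = z⁻¹ * ((y⁻¹)⁻¹ * z * y⁻¹) by group]
    exact hzN.conj_mem' _ (mul_mem (inv_mem hz) (hzN.conj_mem' z hz _)) u
  have hzε : Commute z ε := setLike_mul_comm hz hε
  rw [mul_assoc _ _ ((a * u * z * b)⁻¹ * x * (a * u * z * b))⁻¹, hQR.inv_inv.eq, hxy]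
  calc _ = (u * z * b)⁻¹ * (z⁻¹ * y * z * y⁻¹) * (u * z * b) *
        ((u * b)⁻¹ * ((z⁻¹ * y⁻¹ * z) * y) * (u * b)) := by group
    _ = b⁻¹ * (z⁻¹ * (ε * z) * ε⁻¹) * b := by rw [hyz.eq, hε_def]; group
    _ = 1 := by rw [← hzε.eq]; group

end ConjugatesCommute

/-! ## The reduced free group -/

lemma normalClosure_redRelators_le_ker (n : ℕ) :
    Subgroup.normalClosure (redRelators n) ≤ (reducedMagnus (α := Fin n)).ker := by
  refine Subgroup.normalClosure_le_normal ?_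
  rintro _ ⟨i, w, rfl⟩
  simp only [SetLike.mem_coe, MonoidHom.mem_ker, map_mul, map_inv, reducedMagnus_of]
  rw [← commute_iff_inv_mul_inv_mul_mul_eq_one]
  refine Units.ext (ReducedSeries.commute_of_sub_one_mem_varIdeal (j := i) ?_ ?_).eq
  · simpa using ReducedSeries.conj_unitX_sub_one_mem_varIdeal i 1
  · exact ReducedSeries.conj_unitX_sub_one_mem_varIdeal i _

namespace RF

variable {n : ℕ}

def mk (n : ℕ) : FreeGroup (Fin n) →* RF n := QuotientGroup.mk' _

lemma mk_surjective : Function.Surjective (mk n) := QuotientGroup.mk'_surjective _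

lemma mk_eq_one_iff {g : FreeGroup (Fin n)} :
    mk n g = 1 ↔ g ∈ Subgroup.normalClosure (redRelators n) :=
  QuotientGroup.eq_one_iff g

instance isMulCommutative_normalClosure_mk_of (k : Fin n) :
    IsMulCommutative (Subgroup.normalClosure {mk n (FreeGroup.of k)}) := by
  refine isMulCommutative_normalClosure_singleton fun c => ?_
  obtain ⟨w, rfl⟩ := mk_surjective c
  rw [commute_iff_inv_mul_inv_mul_mul_eq_one]
  simpa using mk_eq_one_iff.2 (Subgroup.subset_normalClosure ⟨k, w, rfl⟩)

def reducedMagnus (n : ℕ) : RF n →* (ReducedSeries ℤ (Fin n))ˣ :=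
  QuotientGroup.lift _ _root_.reducedMagnus (normalClosure_redRelators_le_ker n)

lemma reducedMagnus_mk (g : FreeGroup (Fin n)) :
    reducedMagnus n (mk n g) = _root_.reducedMagnus g :=
  rfl

end RF

/-! ## The kernel of the reduced Magnus expansion on the group ring -/

lemma eq_one_sub_add_mul_of_mul_eq_one {R : Type*} [Ring R] {s t : R} (h : s * t = 1) :
    t = 1 - (s - 1) + (s - 1) * (s - 1) * t := by
  rw [show (s - 1) * (s - 1) * t = s * (s * t) - 2 * (s * t) + t by noncomm_ring, h]
  noncomm_ring

section GroupRing

variable {α : Type*}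

noncomputable def xSubOne (v : α) : MonoidAlgebra ℤ (FreeGroup α) :=
  MonoidAlgebra.of ℤ _ (FreeGroup.of v) - 1

noncomputable def xSubOneProd (l : List α) : MonoidAlgebra ℤ (FreeGroup α) :=
  (l.map xSubOne).prod

lemma xSubOneProd_append (l l' : List α) :
    xSubOneProd (l ++ l') = xSubOneProd l * xSubOneProd l' := by
  rw [xSubOneProd, List.map_append, List.prod_append, ← xSubOneProd, ← xSubOneProd]

variable (j : α)

/-- The kernel of `eraseVar j ∘ magnusAlgHom`, by `eraseVar_magnusAlgHom_eq_zero_of_mem` and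
`mem_reducedIdeal_of_eraseVar_magnusAlgHom_eq_zero`. -/
noncomputable def reducedIdeal : TwoSidedIdeal (MonoidAlgebra ℤ (FreeGroup α)) :=
  TwoSidedIdeal.span ({xSubOne j} ∪
    Set.range fun p : α × FreeGroup α => xSubOne p.1 * MonoidAlgebra.of ℤ _ p.2 * xSubOne p.1)

lemma mul_xSubOne_mul_xSubOne_mul_mem (v : α) (a u b : MonoidAlgebra ℤ (FreeGroup α)) :
    a * xSubOne v * u * xSubOne v * b ∈ reducedIdeal j := by
  induction u using MonoidAlgebra.induction_linear with
  | zero => simp only [mul_zero, zero_mul]; exact zero_mem _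
  | add u u' h h' => simpa only [mul_add, add_mul] using add_mem h h'
  | single g m =>
    have hgen : xSubOne v * MonoidAlgebra.of ℤ _ g * xSubOne v ∈ reducedIdeal j :=
      TwoSidedIdeal.subset_span (.inr ⟨(v, g), rfl⟩)
    convert zsmul_mem (TwoSidedIdeal.mul_mem_right _ _ b (TwoSidedIdeal.mul_mem_left _ a _ hgen)) m
      using 1
    rw [show MonoidAlgebra.single g m = m • MonoidAlgebra.of ℤ _ g by simp]
    simp only [mul_smul_comm, smul_mul_assoc, mul_assoc]

lemma xSubOneProd_mem_of_not_nodup {l : List α} (hl : ¬l.Nodup) :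
    xSubOneProd l ∈ reducedIdeal j := by
  obtain ⟨v, hv⟩ : ∃ v, [v, v].Sublist l := by simpa [List.nodup_iff_sublist] using hl
  obtain ⟨r₁, r₂, rfl, h₁, h₂⟩ := List.cons_sublist_iff.1 hv
  obtain ⟨s, t, rfl⟩ := List.append_of_mem h₁
  obtain ⟨s', t', rfl⟩ := List.append_of_mem (List.singleton_sublist.1 h₂)
  convert mul_xSubOne_mul_xSubOne_mul_mem j v (xSubOneProd s) (xSubOneProd (t ++ s'))
    (xSubOneProd t') using 1
  simp [xSubOneProd, mul_assoc]

lemma xSubOneProd_mem_of_mem {l : List α} (hl : j ∈ l) : xSubOneProd l ∈ reducedIdeal j := by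
  obtain ⟨s, t, rfl⟩ := List.append_of_mem hl
  have hgen : xSubOne j ∈ reducedIdeal j := TwoSidedIdeal.subset_span (.inl rfl)
  convert TwoSidedIdeal.mul_mem_right _ _ (xSubOneProd t)
    (TwoSidedIdeal.mul_mem_left _ (xSubOneProd s) _ hgen) using 1
  simp [xSubOneProd, mul_assoc]

noncomputable def nodupSpan : Submodule ℤ (MonoidAlgebra ℤ (FreeGroup α)) :=
  Submodule.span ℤ (Set.range fun l : {l : List α // l.Nodup ∧ j ∉ l} => xSubOneProd l.1)

noncomputable def nodupSpanSupIdeal : Submodule ℤ (MonoidAlgebra ℤ (FreeGroup α)) :=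
  nodupSpan j ⊔ (reducedIdeal j).asIdeal.restrictScalars ℤ

variable {j}

lemma mem_nodupSpanSupIdeal_of_mem {x : MonoidAlgebra ℤ (FreeGroup α)}
    (hx : x ∈ reducedIdeal j) : x ∈ nodupSpanSupIdeal j :=
  Submodule.mem_sup_right (TwoSidedIdeal.mem_asIdeal.2 hx)

lemma xSubOneProd_mem_nodupSpanSupIdeal (l : List α) : xSubOneProd l ∈ nodupSpanSupIdeal j := by
  by_cases hnd : l.Nodup
  · by_cases hj : j ∈ l
    · exact mem_nodupSpanSupIdeal_of_mem (xSubOneProd_mem_of_mem j hj)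
    · exact Submodule.mem_sup_left (Submodule.subset_span ⟨⟨l, hnd, hj⟩, rfl⟩)
  · exact mem_nodupSpanSupIdeal_of_mem (xSubOneProd_mem_of_not_nodup j hnd)

lemma mul_mem_nodupSpanSupIdeal {x y : MonoidAlgebra ℤ (FreeGroup α)}
    (hx : x ∈ nodupSpanSupIdeal j) (hy : y ∈ nodupSpanSupIdeal j) :
    x * y ∈ nodupSpanSupIdeal j := by
  have hEE : nodupSpan j * nodupSpan j ≤ nodupSpanSupIdeal j := by
    rw [nodupSpan, Submodule.span_mul_span, Submodule.span_le]
    rintro _ ⟨_, ⟨l, rfl⟩, _, ⟨l', rfl⟩, rfl⟩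
    simpa only [xSubOneProd_append, SetLike.mem_coe] using
      xSubOneProd_mem_nodupSpanSupIdeal (l.1 ++ l'.1)
  obtain ⟨e, he, i, hi, rfl⟩ := Submodule.mem_sup.1 hx
  obtain ⟨e', he', i', hi', rfl⟩ := Submodule.mem_sup.1 hy
  rw [Submodule.restrictScalars_mem, TwoSidedIdeal.mem_asIdeal] at hi hi'
  rw [add_mul, mul_add]
  exact add_mem (add_mem (hEE (Submodule.mul_mem_mul he he'))
    (mem_nodupSpanSupIdeal_of_mem (TwoSidedIdeal.mul_mem_left _ _ _ hi')))
    (mem_nodupSpanSupIdeal_of_mem (TwoSidedIdeal.mul_mem_right _ _ _ hi))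

lemma monoidAlgebraOf_mem_nodupSpanSupIdeal (g : FreeGroup α) :
    MonoidAlgebra.of ℤ _ g ∈ nodupSpanSupIdeal j := by
  have hone : (1 : MonoidAlgebra ℤ (FreeGroup α)) ∈ nodupSpanSupIdeal j :=
    xSubOneProd_mem_nodupSpanSupIdeal []
  have hx (v : α) : xSubOne v ∈ nodupSpanSupIdeal j := by
    simpa [xSubOneProd] using xSubOneProd_mem_nodupSpanSupIdeal (j := j) [v]
  induction g using FreeGroup.induction_on with
  | C1 => rw [map_one]; exact hone
  | of v =>
    rw [show MonoidAlgebra.of ℤ _ (FreeGroup.of v) = 1 + xSubOne v by simp [xSubOne]]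
    exact add_mem hone (hx v)
  | inv_of v _ =>
    rw [eq_one_sub_add_mul_of_mul_eq_one (s := MonoidAlgebra.of ℤ _ (FreeGroup.of v))
      (t := MonoidAlgebra.of ℤ _ (FreeGroup.of v)⁻¹)
      (by rw [← map_mul, mul_inv_cancel, map_one])]
    refine add_mem (sub_mem hone (hx v)) (mem_nodupSpanSupIdeal_of_mem ?_)
    have := mul_xSubOne_mul_xSubOne_mul_mem j v 1 1 (MonoidAlgebra.of ℤ _ (FreeGroup.of v)⁻¹)
    rwa [one_mul, mul_one] at this
  | mul x y hx hy => rw [map_mul]; exact mul_mem_nodupSpanSupIdeal hx hy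

lemma nodupSpanSupIdeal_eq_top : nodupSpanSupIdeal j = ⊤ := by
  refine Submodule.eq_top_iff'.2 fun x => ?_
  induction x using MonoidAlgebra.induction_on with
  | of g => exact monoidAlgebraOf_mem_nodupSpanSupIdeal g
  | add x y hx hy => exact add_mem hx hy
  | smul m x hx => exact Submodule.smul_mem _ m hx

end GroupRing

section MagnusAlgHom

variable {α : Type*} [DecidableEq α]

noncomputable def magnusAlgHom :
    MonoidAlgebra ℤ (FreeGroup α) →ₐ[ℤ] ReducedSeries ℤ α :=
  MonoidAlgebra.lift ℤ _ _ ((Units.coeHom _).comp reducedMagnus)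

lemma magnusAlgHom_single (w : FreeGroup α) (m : ℤ) :
    magnusAlgHom (MonoidAlgebra.single w m) = m • (reducedMagnus w : ReducedSeries ℤ α) :=
  MonoidAlgebra.lift_single _ _ _

lemma magnusAlgHom_xSubOne (v : α) : magnusAlgHom (xSubOne v) = monomial [v] := by
  rw [xSubOne, map_sub, map_one, MonoidAlgebra.of_apply, magnusAlgHom_single, one_smul,
    reducedMagnus_of]
  exact add_sub_cancel_left _ _

lemma magnusAlgHom_xSubOneProd (l : List α) : magnusAlgHom (xSubOneProd l) = monomial l := by
  induction l with
  | nil => exact map_one _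
  | cons v l ih =>
    rw [← List.singleton_append, xSubOneProd_append, map_mul, ih,
      ← ReducedSeries.monomial_mul_monomial, ← magnusAlgHom_xSubOne]
    simp [xSubOneProd]

variable (j : α)

lemma eraseVar_magnusAlgHom_eq_zero_of_mem {x : MonoidAlgebra ℤ (FreeGroup α)}
    (hx : x ∈ reducedIdeal j) : eraseVar j (magnusAlgHom x) = 0 := by
  suffices reducedIdeal j ≤ TwoSidedIdeal.ker ((eraseVar j).comp magnusAlgHom.toRingHom) from
    (TwoSidedIdeal.mem_ker _).1 (this hx)
  refine TwoSidedIdeal.span_le.2 ?_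
  rintro _ (h | ⟨⟨v, u⟩, rfl⟩) <;>
    rw [SetLike.mem_coe, TwoSidedIdeal.mem_ker, RingHom.comp_apply, AlgHom.toRingHom_eq_coe,
      RingHom.coe_coe]
  · rw [Set.mem_singleton_iff.1 h, magnusAlgHom_xSubOne, ReducedSeries.eraseVar_monomial,
      if_pos (List.mem_singleton_self j)]
  · have hv := ReducedSeries.monomial_mem_varIdeal (k := ℤ) (List.mem_singleton_self v)
    have : magnusAlgHom (xSubOne v * MonoidAlgebra.of ℤ _ u * xSubOne v) = 0 := by
      rw [map_mul, map_mul, magnusAlgHom_xSubOne]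
      exact ReducedSeries.mul_eq_zero_of_mem_varIdeal (TwoSidedIdeal.mul_mem_right _ _ _ hv) hv
    rw [this, map_zero]

variable {j}

lemma mem_reducedIdeal_of_eraseVar_magnusAlgHom_eq_zero {x : MonoidAlgebra ℤ (FreeGroup α)}
    (hx : eraseVar j (magnusAlgHom x) = 0) : x ∈ reducedIdeal j := by
  obtain ⟨e, he, i, hi, rfl⟩ :=
    Submodule.mem_sup.1 (nodupSpanSupIdeal_eq_top (j := j) ▸ Submodule.mem_top : x ∈ _)
  rw [Submodule.restrictScalars_mem, TwoSidedIdeal.mem_asIdeal] at hi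
  suffices e = 0 by rwa [this, zero_add]
  obtain ⟨c, rfl⟩ := Finsupp.mem_span_range_iff_exists_finsupp.1 he
  have hli : LinearIndependent ℤ fun l : {l : List α // l.Nodup ∧ j ∉ l} =>
      (monomial l.1 : ReducedSeries ℤ α) :=
    ReducedSeries.linearIndependent_monomial.comp
      (fun l : {l : List α // l.Nodup ∧ j ∉ l} =>
        (⟨l.1, l.2.1⟩ : {l : List α // l.Nodup}))
      fun l l' h => Subtype.ext (congrArg Subtype.val h :)
  have hc : Finsupp.linearCombination ℤ (fun l : {l : List α // l.Nodup ∧ j ∉ l} =>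
      (monomial l.1 : ReducedSeries ℤ α)) c = 0 := by
    rw [map_add, map_add, eraseVar_magnusAlgHom_eq_zero_of_mem j hi, add_zero] at hx
    rw [← hx, Finsupp.linearCombination_apply, map_finsuppSum, map_finsuppSum]
    refine Finsupp.sum_congr fun l _ => ?_
    rw [map_zsmul, map_zsmul, magnusAlgHom_xSubOneProd, ReducedSeries.eraseVar_monomial,
      if_neg l.2.2]
  rw [linearIndependent_iff.1 hli c hc, Finsupp.sum_zero_index]

end MagnusAlgHom

/-! ## Powers of a generator by elements of the group ring -/

section ConjPow

open scoped IsMulCommutative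

variable {n : ℕ} (j : Fin n)

/-- `x_j ^ r` for `r` in the group ring, written additively:
`x_j ^ (∑ m_w • w) = ∏ (w⁻¹ x_j w) ^ m_w`, which makes sense because the normal closure
of `x_j` in `RF_n` is abelian. -/
noncomputable def conjPow :
    MonoidAlgebra ℤ (FreeGroup (Fin n)) →ₗ[ℤ]
      Additive (Subgroup.normalClosure {RF.mk n (FreeGroup.of j)}) :=
  (MonoidAlgebra.basis _ ℤ).constr ℤ fun w =>
    .ofMul ⟨(RF.mk n w)⁻¹ * RF.mk n (FreeGroup.of j) * RF.mk n w,
      Subgroup.normalClosure_normal.conj_mem' _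
        (Subgroup.subset_normalClosure (Set.mem_singleton _)) _⟩

lemma coe_conjPow_single (w : FreeGroup (Fin n)) (m : ℤ) :
    ((conjPow j (MonoidAlgebra.single w m)).toMul : RF n) =
      ((RF.mk n w)⁻¹ * RF.mk n (FreeGroup.of j) * RF.mk n w) ^ m := by
  rw [show MonoidAlgebra.single w m = m • MonoidAlgebra.basis _ ℤ w by simp, map_zsmul, conjPow,
    Module.Basis.constr_basis, toMul_zsmul, SubgroupClass.coe_zpow]
  rfl

noncomputable def conjMagnus :
    MonoidAlgebra ℤ (FreeGroup (Fin n)) →ₗ[ℤ] ReducedSeries ℤ (Fin n) :=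
  (MonoidAlgebra.basis _ ℤ).constr ℤ fun w =>
    (reducedMagnus w⁻¹).val * monomial [j] * (reducedMagnus w).val

lemma conjMagnus_single (w : FreeGroup (Fin n)) (m : ℤ) :
    conjMagnus j (MonoidAlgebra.single w m) =
      m • ((reducedMagnus w⁻¹).val * monomial [j] * (reducedMagnus w).val) := by
  rw [show MonoidAlgebra.single w m = m • MonoidAlgebra.basis _ ℤ w by simp, map_zsmul,
    conjMagnus, Module.Basis.constr_basis]

lemma conjMagnus_mem_varIdeal (x : MonoidAlgebra ℤ (FreeGroup (Fin n))) :
    conjMagnus j x ∈ varIdeal j := by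
  induction x using MonoidAlgebra.induction_linear with
  | zero => rw [map_zero]; exact zero_mem _
  | add x y hx hy => rw [map_add]; exact add_mem hx hy
  | single w m =>
    rw [conjMagnus_single]
    exact zsmul_mem (TwoSidedIdeal.mul_mem_right _ _ _ (TwoSidedIdeal.mul_mem_left _ _ _
      (ReducedSeries.monomial_mem_varIdeal (List.mem_singleton_self j)))) m

lemma reducedMagnus_conjPow (x : MonoidAlgebra ℤ (FreeGroup (Fin n))) :
    (RF.reducedMagnus n (conjPow j x).toMul : ReducedSeries ℤ (Fin n)) = 1 + conjMagnus j x := by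
  induction x using MonoidAlgebra.induction_linear with
  | zero => simp
  | add x y hx hy =>
    have hxy := ReducedSeries.mul_eq_zero_of_mem_varIdeal (conjMagnus_mem_varIdeal j x)
      (conjMagnus_mem_varIdeal j y)
    rw [map_add, toMul_add, Subgroup.coe_mul, map_mul, Units.val_mul, hx, hy, map_add, add_mul,
      one_mul, mul_add, mul_one, hxy]
    abel
  | single w m =>
    set c := reducedMagnus w
    have hconj : (c⁻¹ * unitX j * c) ^ m = c⁻¹ * unitX j ^ m * c := by
      simpa using conj_zpow (a := c⁻¹) (b := unitX j) (i := m)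
    rw [conjMagnus_single, map_inv, coe_conjPow_single, map_zpow, map_mul, map_mul, map_inv,
      RF.reducedMagnus_mk, RF.reducedMagnus_mk, reducedMagnus_of, hconj, Units.val_mul,
      Units.val_mul, ReducedSeries.val_unitX_zpow, mul_add, add_mul, mul_one, Units.inv_mul,
      mul_smul_comm, smul_mul_assoc]

lemma conjMagnus_apply_cons (x : MonoidAlgebra ℤ (FreeGroup (Fin n))) {q : List (Fin n)}
    (h : (j :: q).Nodup) : conjMagnus j x ⟨j :: q, h⟩ = magnusAlgHom x ⟨q, h.of_cons⟩ := by
  induction x using MonoidAlgebra.induction_linear with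
  | zero => simp only [map_zero]; rfl
  | add x y hx hy => rw [map_add, map_add, ReducedSeries.add_apply, ReducedSeries.add_apply, hx, hy]
  | single w m =>
    rw [conjMagnus_single, magnusAlgHom_single, ReducedSeries.zsmul_apply,
      ReducedSeries.zsmul_apply, ReducedSeries.mul_monomial_mul_apply_cons,
      constantCoeff_reducedMagnus, one_mul]

lemma eraseVar_magnusAlgHom_eq_zero_of_conjMagnus_eq_zero
    {x : MonoidAlgebra ℤ (FreeGroup (Fin n))} (hx : conjMagnus j x = 0) :
    eraseVar j (magnusAlgHom x) = 0 := by
  funext ⟨q, hq⟩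
  rw [ReducedSeries.eraseVar_apply]
  split_ifs with hjq
  · rfl
  · rw [← conjMagnus_apply_cons j x (List.nodup_cons.2 ⟨hjq, hq⟩), hx]
    rfl

lemma conjPow_eq_zero_iff {x : MonoidAlgebra ℤ (FreeGroup (Fin n))} :
    conjPow j x = 0 ↔ ((conjPow j x).toMul : RF n) = 1 := by
  rw [OneMemClass.coe_eq_one, toMul_eq_one]

lemma coe_conjPow_of (g : FreeGroup (Fin n)) :
    ((conjPow j (MonoidAlgebra.of ℤ _ g)).toMul : RF n) =
      (RF.mk n g)⁻¹ * RF.mk n (FreeGroup.of j) * RF.mk n g := by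
  rw [MonoidAlgebra.of_apply, coe_conjPow_single, zpow_one]

/-- The largest two-sided ideal on which `conjPow j` vanishes. -/
noncomputable def conjPowIdeal : TwoSidedIdeal (MonoidAlgebra ℤ (FreeGroup (Fin n))) :=
  .mk' {x | ∀ a b : FreeGroup (Fin n),
      conjPow j (MonoidAlgebra.of ℤ _ a * x * MonoidAlgebra.of ℤ _ b) = 0}
    (fun a b => by simp)
    (fun hx hy a b => by simp only [mul_add, add_mul, map_add, hx a b, hy a b, add_zero])
    (fun hx a b => by simp only [mul_neg, neg_mul, map_neg, hx a b, neg_zero])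
    (fun {y x} hx a b => by
      induction y using MonoidAlgebra.induction_linear with
      | zero => simp
      | add y y' h h' => simp only [add_mul, mul_add, map_add, h, h', add_zero]
      | single u m =>
        rw [show MonoidAlgebra.single u m = m • MonoidAlgebra.of ℤ _ u by simp]
        simp only [smul_mul_assoc, mul_smul_comm, map_zsmul]
        rw [← mul_assoc, ← map_mul, hx, smul_zero])
    (fun {x y} hx a b => by
      induction y using MonoidAlgebra.induction_linear with
      | zero => simp
      | add y y' h h' => simp only [add_mul, mul_add, map_add, h, h', add_zero]
      | single u m =>
        rw [show MonoidAlgebra.single u m = m • MonoidAlgebra.of ℤ _ u by simp]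
        simp only [smul_mul_assoc, mul_smul_comm, map_zsmul]
        rw [← mul_assoc, mul_assoc _ (MonoidAlgebra.of ℤ _ u), ← map_mul, hx, smul_zero])

lemma mem_conjPowIdeal {x : MonoidAlgebra ℤ (FreeGroup (Fin n))} :
    x ∈ conjPowIdeal j ↔ ∀ a b : FreeGroup (Fin n),
      conjPow j (MonoidAlgebra.of ℤ _ a * x * MonoidAlgebra.of ℤ _ b) = 0 :=
  TwoSidedIdeal.mem_mk' ..

lemma xSubOne_mem_conjPowIdeal : xSubOne j ∈ conjPowIdeal j := by
  refine (mem_conjPowIdeal j).2 fun a b => (conjPow_eq_zero_iff j).2 ?_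
  have : MonoidAlgebra.of ℤ _ a * xSubOne j * MonoidAlgebra.of ℤ _ b =
      MonoidAlgebra.of ℤ _ (a * FreeGroup.of j * b) - MonoidAlgebra.of ℤ _ (a * b) := by
    simp only [xSubOne, map_mul]
    noncomm_ring
  rw [this, map_sub, toMul_sub, SubgroupClass.coe_div, coe_conjPow_of, coe_conjPow_of]
  simp only [map_mul]
  rw [conj_mul_self_mul, div_self']

lemma xSubOne_mul_of_mul_xSubOne_mem_conjPowIdeal (v : Fin n) (u : FreeGroup (Fin n)) :
    xSubOne v * MonoidAlgebra.of ℤ _ u * xSubOne v ∈ conjPowIdeal j := by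
  refine (mem_conjPowIdeal j).2 fun a b => (conjPow_eq_zero_iff j).2 ?_
  set x := FreeGroup.of v
  have : MonoidAlgebra.of ℤ _ a * (xSubOne v * MonoidAlgebra.of ℤ _ u * xSubOne v) *
      MonoidAlgebra.of ℤ _ b = MonoidAlgebra.of ℤ _ (a * x * u * x * b) -
        MonoidAlgebra.of ℤ _ (a * x * u * b) - MonoidAlgebra.of ℤ _ (a * u * x * b) +
        MonoidAlgebra.of ℤ _ (a * u * b) := by
    simp only [xSubOne, map_mul]
    noncomm_ring
  rw [this]
  simp only [map_add, map_sub, toMul_add, toMul_sub, Subgroup.coe_mul, SubgroupClass.coe_div,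
    coe_conjPow_of]
  simp only [map_mul, div_eq_mul_inv]
  exact conj_second_difference_eq_one (x := RF.mk n (FreeGroup.of j)) (z := RF.mk n x) _ _ _

lemma conjPow_eq_zero_of_mem {x : MonoidAlgebra ℤ (FreeGroup (Fin n))}
    (hx : x ∈ reducedIdeal j) : conjPow j x = 0 := by
  have : reducedIdeal j ≤ conjPowIdeal j := by
    refine TwoSidedIdeal.span_le.2 ?_
    rintro _ (h | ⟨⟨v, u⟩, rfl⟩)
    · rw [Set.mem_singleton_iff.1 h]; exact xSubOne_mem_conjPowIdeal j
    · exact xSubOne_mul_of_mul_xSubOne_mem_conjPowIdeal j v u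
  simpa only [map_one, one_mul, mul_one] using (mem_conjPowIdeal j).1 (this hx) 1 1

end ConjPow

/-! ## Injectivity of the reduced Magnus expansion on `RF_n` -/

section Kernel

open scoped IsMulCommutative

variable {n : ℕ}

lemma exists_conjPow_eq_mk {j : Fin n} {m : FreeGroup (Fin n)}
    (hm : m ∈ Subgroup.normalClosure {FreeGroup.of j}) :
    ∃ x, ((conjPow j x).toMul : RF n) = RF.mk n m := by
  induction hm using Subgroup.closure_induction with
  | mem g hg =>
    obtain ⟨_, rfl, hconj⟩ := Group.mem_conjugatesOfSet_iff.1 hg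
    obtain ⟨c, rfl⟩ := isConj_iff.1 hconj
    exact ⟨MonoidAlgebra.of ℤ _ c⁻¹, by rw [coe_conjPow_of]; simp⟩
  | one => exact ⟨0, by simp⟩
  | mul g h _ _ hg hh =>
    obtain ⟨r, hr⟩ := hg
    obtain ⟨s, hs⟩ := hh
    exact ⟨r + s, by rw [map_add, toMul_add, Subgroup.coe_mul, hr, hs, map_mul]⟩
  | inv g _ hg =>
    obtain ⟨r, hr⟩ := hg
    exact ⟨-r, by rw [map_neg, toMul_neg, InvMemClass.coe_inv, hr, map_inv]⟩

lemma mem_of_mem_normalClosure_of_reducedMagnus_eq_one {j : Fin n} {m : FreeGroup (Fin n)}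
    (hm : m ∈ Subgroup.normalClosure {FreeGroup.of j}) (h : reducedMagnus m = 1) :
    m ∈ Subgroup.normalClosure (redRelators n) := by
  obtain ⟨x, hx⟩ := exists_conjPow_eq_mk hm
  have hD : conjMagnus j x = 0 := by
    have := reducedMagnus_conjPow j x
    rwa [hx, RF.reducedMagnus_mk, h, Units.val_one, left_eq_add] at this
  rw [← RF.mk_eq_one_iff, ← hx]
  exact (conjPow_eq_zero_iff j).1 (conjPow_eq_zero_of_mem j
    (mem_reducedIdeal_of_eraseVar_magnusAlgHom_eq_zero
      (eraseVar_magnusAlgHom_eq_zero_of_conjMagnus_eq_zero j hD)))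

theorem mem_normalClosure_redRelators_of_reducedMagnus_eq_one {g : FreeGroup (Fin n)}
    (hg : reducedMagnus g = 1) : g ∈ Subgroup.normalClosure (redRelators n) := by
  suffices ∀ S : Finset (Fin n), ∀ g : FreeGroup (Fin n), reducedMagnus g = 1 →
      eraseGens S g ∈ Subgroup.normalClosure (redRelators n) →
        g ∈ Subgroup.normalClosure (redRelators n) from
    this Finset.univ g hg (by rw [FreeGroup.eraseGens_univ]; exact one_mem _)
  intro S
  induction S using Finset.induction_on with
  | empty => intro g _ h; simpa [FreeGroup.eraseGens_empty] using h
  | insert j S _ ih =>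
    intro g hg h
    have hg' : reducedMagnus (eraseGens {j} g) = 1 := by
      rw [reducedMagnus_eraseGens_singleton, hg, map_one]
    have hK := ih _ hg' (by rwa [FreeGroup.eraseGens_insert] at h)
    have hm := mem_of_mem_normalClosure_of_reducedMagnus_eq_one
      (FreeGroup.mul_inv_eraseGens_mem_normalClosure j g)
      (by rw [map_mul, map_inv, hg, hg', inv_one, mul_one])
    simpa using mul_mem hm hK

end Kernel

section Commutator

variable {n : ℕ} {i : Fin n} {g : FreeGroup (Fin n)}

lemma magnus_eq_zero_of_commute (hc : Commute (RF.mk n (FreeGroup.of i)) (RF.mk n g))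
    {l : List (Fin n)} (hne : l ≠ []) (hl : l.Nodup) (hi : i ∉ l) : magnus g l = 0 := by
  have hc' := (hc.map (RF.reducedMagnus n)).units_val
  rw [RF.reducedMagnus_mk, RF.reducedMagnus_mk, reducedMagnus_of] at hc'
  have hX : Commute (monomial [i]) (reducedMagnus g : ReducedSeries ℤ (Fin n)) := by
    simpa [unitX] using hc'.sub_left (Commute.one_left _)
  rw [magnus_eq_reducedMagnus_apply g hl]
  exact ReducedSeries.apply_eq_zero_of_commute hX hl hne hi

lemma reducedMagnus_eraseGens_eq_one
    (h : ∀ l : List (Fin n), l ≠ [] → l.Nodup → magnus g l ≠ 0 → i ∈ l) :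
    reducedMagnus (eraseGens {i} g) = 1 := by
  rw [reducedMagnus_eraseGens_singleton]
  refine Units.ext (funext fun ⟨l, hl⟩ => ?_)
  rw [Units.coe_map, RingHom.toMonoidHom_eq_coe, MonoidHom.coe_coe, ReducedSeries.eraseVar_apply,
    Units.val_one, ReducedSeries.one_apply]
  split_ifs with hi hnil hnil
  · exact (List.ne_nil_of_mem hi hnil).elim
  · rfl
  · subst hnil; exact constantCoeff_reducedMagnus g
  · rw [← magnus_eq_reducedMagnus_apply]
    exact not_not.1 fun hne => hi (h l hnil hl hne)

lemma mk_mem_normalClosure_of_reducedMagnus_eraseGens_eq_one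
    (h : reducedMagnus (eraseGens {i} g) = 1) :
    RF.mk n g ∈ Subgroup.normalClosure {RF.mk n (FreeGroup.of i)} := by
  have hK := RF.mk_eq_one_iff.2 (mem_normalClosure_redRelators_of_reducedMagnus_eq_one h)
  have hm := Subgroup.mem_map_of_mem (RF.mk n) (FreeGroup.mul_inv_eraseGens_mem_normalClosure i g)
  rwa [Subgroup.map_normalClosure _ _ RF.mk_surjective, Set.image_singleton, map_mul, map_inv, hK,
    inv_one, mul_one] at hm

end Commutator

/-- [x_i, g] is trivial in RF_n iff every non-repeated monomial of E(g) - 1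
with nonzero coefficient contains the variable X_i. -/
theorem commutator_trivial_iff {n : ℕ} (i : Fin n) (g : FreeGroup (Fin n)) :
    (FreeGroup.of i)⁻¹ * g⁻¹ * FreeGroup.of i * g ∈
        Subgroup.normalClosure (redRelators n) ↔
      ∀ l : List (Fin n), l ≠ [] → l.Nodup → magnus g l ≠ 0 → i ∈ l := by
  rw [← RF.mk_eq_one_iff, map_mul, map_mul, map_mul, map_inv, map_inv,
    ← commute_iff_inv_mul_inv_mul_mul_eq_one]
  refine ⟨fun hc l hne hl hmag => ?_, fun h => ?_⟩
  · by_contra hi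
    exact hmag (magnus_eq_zero_of_commute hc hne hl hi)
  · exact setLike_mul_comm (Subgroup.subset_normalClosure (Set.mem_singleton _))
      (mk_mem_normalClosure_of_reducedMagnus_eraseGens_eq_one (reducedMagnus_eraseGens_eq_one h))
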